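/- arXiv:2307.12209 — 3 statements merged into one kernel-verified Lean document; each statement's English description precedes it below -/
import Mathlib

section
/- Let s ∈ ℂ, let γ = [[a,b],[c,d]] ∈ SL(2,ℝ), let z = x+iy ∈ ℍ, and let θ ∈ ℝ. Then α¹(γ·(z, v_z(θ))) = −(y^{s+1}/|cz+d|^{2s+2}) · sin(θ − 2 arg(cz+d)); that is, (Im γz)^s · Re(v_z(θ)/(cz+d)²) = −(y^{s+1}/|cz+d|^{2s+2}) · sin(θ − 2 arg(cz+d)). -/
open Complex MeasureTheory
open scoped Real

noncomputable section

abbrev SL2Z := Matrix.SpecialLinearGroup (Fin 2) ℤ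
abbrev SL2R := Matrix.SpecialLinearGroup (Fin 2) ℝ

/-- Entrywise coercion `SL(2,ℤ) → SL(2,ℝ)`. -/
def toSL (g : SL2Z) : SL2R := Matrix.SpecialLinearGroup.map (Int.castRingHom ℝ) g

/-- Möbius action of `SL(2,ℝ)` on `ℂ`. -/
def moeb (γ : SL2R) (z : ℂ) : ℂ :=
  ((γ.1 0 0 : ℝ) * z + (γ.1 0 1 : ℝ)) / ((γ.1 1 0 : ℝ) * z + (γ.1 1 1 : ℝ))

/-- Automorphy factor `cz + d`. -/
def denom (γ : SL2R) (z : ℂ) : ℂ := (γ.1 1 0 : ℝ) * z + (γ.1 1 1 : ℝ)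

/-- Action of `SL(2,ℝ)` on the tangent bundle: `γ·(z,v) = (γz, v/(cz+d)²)`. -/
def tact (γ : SL2R) (p : ℂ × ℂ) : ℂ × ℂ := (moeb γ p.1, p.2 / (denom γ p.1) ^ 2)

/-- The 1-form `α¹(z,v) = (Im z)^s · Re v`. -/
def alpha1 (s : ℂ) (p : ℂ × ℂ) : ℂ := (p.1.im : ℂ) ^ s * (p.2.re : ℂ)

/-- Unit hyperbolic tangent vector at `z` with angle `θ`: `Im(z)·i·e^{iθ}`. -/
def uvec (z : ℂ) (θ : ℝ) : ℂ := (z.im : ℂ) * I * Complex.exp (I * (θ : ℂ))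

/-- `e(w) = exp(2πiw)`. -/
def ee (w : ℂ) : ℂ := Complex.exp (2 * (π : ℂ) * I * w)

/-- The translation matrix `T = [[1,1],[0,1]]`. -/
def T : SL2Z := ⟨!![1, 1; 0, 1], by norm_num [Matrix.det_fin_two_of]⟩

/-- The stabilizer `Γ_∞ = ⟨T⟩` of the cusp `∞` in `SL(2,ℤ)`. -/
def Gammainf : Subgroup SL2Z := Subgroup.zpowers T

/-- The 1-form Eisenstein series `E¹((z,v),s) = Σ_{γ ∈ Γ_∞\Γ} α¹(γ·(z,v))`. -/
def E1 (s : ℂ) (p : ℂ × ℂ) : ℂ :=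
  ∑' q : Quotient (QuotientGroup.rightRel Gammainf), alpha1 s (tact (toSL q.out) p)

/-- Modified Bessel function of the second kind `K_ν(x) = ∫_0^∞ e^{-x cosh t} cosh(νt) dt`. -/
def Kbessel (ν : ℂ) (x : ℝ) : ℂ :=
  ∫ t in Set.Ioi (0 : ℝ), Complex.exp (-(x : ℂ) * (Real.cosh t : ℂ)) * Complex.cosh (ν * (t : ℂ))

/-- `φ(s) = √π Γ(s-1/2) ζ(2s-1) / (Γ(s) ζ(2s))`. -/
def phi0 (s : ℂ) : ℂ :=
  (Real.sqrt π : ℂ) * Complex.Gamma (s - 1/2) * riemannZeta (2*s - 1) /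
    (Complex.Gamma s * riemannZeta (2*s))

/-- `φ(n,s) = ζ(2s)⁻¹ Σ_{d | |n|} d^{1-2s}`. -/
def phin (n : ℤ) (s : ℂ) : ℂ :=
  (riemannZeta (2*s))⁻¹ * ∑ d ∈ n.natAbs.divisors, (d : ℂ) ^ ((1 : ℂ) - 2*s)

/-- `φ₁(n,s) = Σ_{c≥1} c^{-2s-2} Σ_{0≤d<c, gcd(d,c)=1} cos(2πnd/c)`. -/
def phi1 (n : ℤ) (s : ℂ) : ℂ :=
  ∑' c : ℕ+, ((c : ℝ) : ℂ) ^ (-2*s - 2) *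
    ∑ d ∈ (Finset.range (c : ℕ)).filter (fun d => Nat.gcd d (c : ℕ) = 1),
      (Real.cos (2*π*(n : ℝ)*(d : ℝ)/(c : ℝ)) : ℂ)

/-- `φ₂(n,s) = Σ_{c≥1} c^{-2s-2} Σ_{0≤d<c, gcd(d,c)=1} sin(2πnd/c)`. -/
def phi2 (n : ℤ) (s : ℂ) : ℂ :=
  ∑' c : ℕ+, ((c : ℝ) : ℂ) ^ (-2*s - 2) *
    ∑ d ∈ (Finset.range (c : ℕ)).filter (fun d => Nat.gcd d (c : ℕ) = 1),
      (Real.sin (2*π*(n : ℝ)*(d : ℝ)/(c : ℝ)) : ℂ)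

/-! Since `Im(γz) = y / |cz+d|²` and `cz+d = |cz+d| e^{i arg(cz+d)}`, the transported vector is
`v_z(θ)/(cz+d)² = (y/|cz+d|²) · i e^{i(θ - 2 arg(cz+d))}`, whose real part is
`-(y/|cz+d|²) sin(θ - 2 arg(cz+d))`; the two factors `y/|cz+d|²` combine to the stated power. -/

lemma moeb_im (γ : SL2R) (z : ℂ) : (moeb γ z).im = z.im / normSq (denom γ z) := by
  have h := UpperHalfPlane.moebius_im γ z
  simp only [Matrix.SpecialLinearGroup.coeToGL_det, Units.val_one, one_mul] at h
  exact h

lemma re_I_mul_exp_div_sq (θ : ℝ) (w : ℂ) :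
    (I * exp (I * θ) / w ^ 2).re = -Real.sin (θ - 2 * arg w) / ‖w‖ ^ 2 := by
  rcases eq_or_ne w 0 with rfl | hw
  · simp
  have hpolar : w ^ 2 = ((‖w‖ ^ 2 : ℝ) : ℂ) * exp (2 * arg w * I) := by
    conv_lhs => rw [← norm_mul_exp_arg_mul_I w]
    rw [mul_pow, ← exp_nat_mul]
    push_cast
    ring_nf
  have hnorm : ((‖w‖ ^ 2 : ℝ) : ℂ) ≠ 0 := by
    exact_mod_cast pow_ne_zero 2 (norm_ne_zero_iff.mpr hw)
  have : I * exp (I * θ) / w ^ 2 = ((‖w‖ ^ 2)⁻¹ : ℝ) * (exp ((θ - 2 * arg w : ℝ) * I) * I) := by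
    rw [hpolar, ofReal_sub, sub_mul, exp_sub, ofReal_inv]
    field_simp
    push_cast
    ring_nf
  rw [this, re_ofReal_mul, mul_I_re, exp_ofReal_mul_I_im]
  ring

lemma uvec_div_sq_re (z w : ℂ) (θ : ℝ) :
    (uvec z θ / w ^ 2).re = z.im / ‖w‖ ^ 2 * -Real.sin (θ - 2 * arg w) := by
  rw [uvec, mul_assoc, mul_div_assoc, re_ofReal_mul, re_I_mul_exp_div_sq]
  ring

lemma ofReal_div_sq_cpow_mul_self {y r : ℝ} (hy : 0 < y) (hr : 0 < r) (s : ℂ) :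
    ((y / r ^ 2 : ℝ) : ℂ) ^ s * ((y / r ^ 2 : ℝ) : ℂ) =
      (y : ℂ) ^ (s + 1) / (r : ℂ) ^ (2 * s + 2) := by
  have hq : ((y / r ^ 2 : ℝ) : ℂ) ≠ 0 := by exact_mod_cast (div_pos hy (pow_pos hr 2)).ne'
  calc _ = ((y / r ^ 2 : ℝ) : ℂ) ^ (s + 1) := by rw [cpow_add _ _ hq, cpow_one]
    _ = (y : ℂ) ^ (s + 1) / ((r ^ 2 : ℝ) : ℂ) ^ (s + 1) := by
      rw [ofReal_div, div_cpow_ofReal_nonneg hy.le (by positivity)]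
    _ = _ := by
      rw [ofReal_pow, sq, mul_cpow_ofReal_nonneg hr.le hr.le, ← sq, ← cpow_ofNat_mul]
      ring_nf

/-- Evaluation of the 1-form `α¹` on the image of a unit tangent vector:
`α¹(γ·(z, v_z(θ))) = -(y^{s+1}/|cz+d|^{2s+2}) sin(θ - 2 arg(cz+d))`. -/
theorem stmt1 (s : ℂ) (γ : SL2R) (z : ℂ) (hz : 0 < z.im) (θ : ℝ) :
    alpha1 s (tact γ (z, uvec z θ)) =
      -((z.im : ℂ) ^ (s + 1) / (((‖denom γ z‖ : ℝ) : ℂ)) ^ (2*s + 2)) *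
        (Real.sin (θ - 2 * Complex.arg (denom γ z)) : ℂ) := by
  have hw : 0 < ‖denom γ z‖ := norm_pos_iff.mpr (UpperHalfPlane.denom_ne_zero_of_im γ hz.ne')
  rw [alpha1, tact, moeb_im, normSq_eq_norm_sq, uvec_div_sq_re, ofReal_mul, ← mul_assoc,
    ofReal_div_sq_cpow_mul_self hz hw]
  push_cast
  ring

end
end

section
/- Let s ∈ ℂ with Re(s) > 1, c > 0, d ∈ ℝ, z = x+iy ∈ ℍ, and n ∈ ℤ. Then ∫_{−∞}^{∞} (cx+ct+d)²/|cz+ct+d|^{2s+4} · e(−nt) dt = e(nx + nd/c) · c^{−2s−2} · y^{−2s−1} · [ ∫_{−∞}^{∞} (t²+1)^{−(s+1)} e(−nyt) dt − ∫_{−∞}^{∞} (t²+1)^{−(s+2)} e(−nyt) dt ]. -/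
open Complex MeasureTheory
open scoped Real

noncomputable section

/-! Substituting `t = y u - x - d/c` turns `cz + ct + d` into `c y (u + i)`, so the integrand becomes
`(cy)^{-2s-2} u² (u² + 1)^{-(s+2)} e(nx + nd/c) e(-nyu)`, and writing `u² = (u² + 1) - 1` splits it
into the two integrals; the Jacobian of the substitution contributes the extra factor `y`. -/

lemma ee_add (a b : ℂ) : ee (a + b) = ee a * ee b := by
  simp only [ee, mul_add, Complex.exp_add]

lemma norm_ee_ofReal (r : ℝ) : ‖ee (r : ℂ)‖ = 1 := by
  simp [ee, Complex.norm_exp]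

lemma continuous_ee_ofReal_mul (m : ℝ) : Continuous fun t : ℝ => ee ((m : ℂ) * t) := by
  unfold ee; fun_prop

lemma continuous_cpow_sq_add_one (w : ℂ) : Continuous fun t : ℝ => ((t ^ 2 + 1 : ℝ) : ℂ) ^ w :=
  (Complex.continuous_ofReal.comp (by fun_prop)).cpow continuous_const fun t =>
    Complex.ofReal_mem_slitPlane.2 (by positivity)

lemma integrable_cpow_neg_sq_add_one {b : ℂ} (hb : 1 / 2 < b.re) :
    Integrable fun t : ℝ => ((t ^ 2 + 1 : ℝ) : ℂ) ^ (-b) := by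
  refine (integrable_rpow_neg_one_add_norm_sq (E := ℝ) (μ := volume) (r := 2 * b.re)
    (by simp; linarith)).mono' (continuous_cpow_sq_add_one _).aestronglyMeasurable
    (Filter.Eventually.of_forall fun t => ?_)
  rw [Complex.norm_cpow_eq_rpow_re_of_pos (by positivity), Real.norm_eq_abs, sq_abs, add_comm,
    Complex.neg_re, neg_div, mul_div_cancel_left₀ _ two_ne_zero]

lemma MeasureTheory.Integrable.mul_ee_ofReal_mul {f : ℝ → ℂ} (hf : Integrable f) (m : ℝ) :
    Integrable fun t : ℝ => f t * ee ((m : ℂ) * t) :=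
  hf.mul_bdd (c := 1) (continuous_ee_ofReal_mul m).aestronglyMeasurable
    (Filter.Eventually.of_forall fun t => by rw [← Complex.ofReal_mul, norm_ee_ofReal])

lemma sq_mul_cpow_neg_sq_add_one (u : ℝ) (s : ℂ) :
    (u : ℂ) ^ 2 * ((u ^ 2 + 1 : ℝ) : ℂ) ^ (-(s + 2)) =
      ((u ^ 2 + 1 : ℝ) : ℂ) ^ (-(s + 1)) - ((u ^ 2 + 1 : ℝ) : ℂ) ^ (-(s + 2)) := by
  have hv : ((u ^ 2 + 1 : ℝ) : ℂ) ≠ 0 := by exact_mod_cast (by positivity : (0 : ℝ) < u ^ 2 + 1).ne'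
  rw [show -(s + 1) = 1 + -(s + 2) by ring, Complex.cpow_add _ _ hv, Complex.cpow_one]
  push_cast
  ring

lemma cpow_two_mul_norm_ofReal_mul_add_I {a : ℝ} (ha : 0 ≤ a) (u : ℝ) (w : ℂ) :
    ((‖(a : ℂ) * (u + I)‖ : ℝ) : ℂ) ^ (2 * w) = (a : ℂ) ^ (2 * w) * ((u ^ 2 + 1 : ℝ) : ℂ) ^ w := by
  have hnorm : ‖(a : ℂ) * (u + I)‖ = a * √(u ^ 2 + 1) := by
    rw [norm_mul, Complex.norm_of_nonneg ha, ← one_mul I, ← Complex.ofReal_one,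
      Complex.norm_add_mul_I, one_pow]
  rw [hnorm, Complex.ofReal_mul, Complex.mul_cpow_ofReal_nonneg ha (Real.sqrt_nonneg _),
    ← Complex.ofReal_ofNat, Complex.cpow_mul_ofReal_nonneg (Real.sqrt_nonneg _),
    Real.rpow_two, Real.sq_sqrt (by positivity)]

lemma ofReal_mul_sq_div_cpow_norm {a : ℝ} (ha : 0 < a) (u : ℝ) (s : ℂ) :
    ((a * u : ℝ) : ℂ) ^ 2 / ((‖(a : ℂ) * (u + I)‖ : ℝ) : ℂ) ^ (2 * s + 4) =
      (a : ℂ) ^ (-2 * s - 2) *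
        (((u ^ 2 + 1 : ℝ) : ℂ) ^ (-(s + 1)) - ((u ^ 2 + 1 : ℝ) : ℂ) ^ (-(s + 2))) := by
  have ha' : (a : ℂ) ≠ 0 := by exact_mod_cast ha.ne'
  have hpow : (a : ℂ) ^ (-2 * s - 2) = (a : ℂ) ^ 2 * ((a : ℂ) ^ (2 * (s + 2)))⁻¹ := by
    rw [← Complex.cpow_neg, ← Complex.cpow_ofNat, ← Complex.cpow_add _ _ ha']
    ring_nf
  rw [show 2 * s + 4 = 2 * (s + 2) by ring, cpow_two_mul_norm_ofReal_mul_add_I ha.le,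
    ← sq_mul_cpow_neg_sq_add_one, hpow, Complex.cpow_neg]
  push_cast
  field_simp

lemma integrand_eq (s : ℂ) {c y : ℝ} (hc : 0 < c) (hy : 0 < y) {d x t u : ℝ} (n : ℤ)
    (hu : t + (x + d / c) = y * u) :
    ((c*x + c*t + d : ℝ) : ℂ) ^ 2 /
        (((‖(c : ℂ) * ((x : ℂ) + (y : ℂ) * I) + (c : ℂ) * (t : ℂ) + (d : ℂ)‖ : ℝ) : ℂ)) ^ (2*s + 4) *
        ee (-(n : ℂ) * (t : ℂ)) =
      ee ((n : ℂ) * (x : ℂ) + (n : ℂ) * (d : ℂ) / (c : ℂ)) * (c : ℂ) ^ (-2*s - 2) *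
        (y : ℂ) ^ (-2*s - 2) *
        (((u ^ 2 + 1 : ℝ) : ℂ) ^ (-(s + 1)) * ee (-(n : ℂ) * (y : ℂ) * (u : ℂ)) -
          ((u ^ 2 + 1 : ℝ) : ℂ) ^ (-(s + 2)) * ee (-(n : ℂ) * (y : ℂ) * (u : ℂ))) := by
  have hu' : (t : ℂ) + ((x : ℂ) + (d : ℂ) / (c : ℂ)) = (y : ℂ) * (u : ℂ) := by exact_mod_cast hu
  have hlin : c*x + c*t + d = (c * y) * u := by
    rw [mul_assoc, ← hu]; field_simp; ring
  have hz : (c : ℂ) * ((x : ℂ) + (y : ℂ) * I) + (c : ℂ) * (t : ℂ) + (d : ℂ) =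
      ((c * y : ℝ) : ℂ) * (u + I) := by
    have hlin' : (c : ℂ) * x + c * t + d = c * y * u := by exact_mod_cast hlin
    push_cast
    linear_combination hlin'
  have hee : ee (-(n : ℂ) * (t : ℂ)) =
      ee ((n : ℂ) * (x : ℂ) + (n : ℂ) * (d : ℂ) / (c : ℂ)) * ee (-(n : ℂ) * (y : ℂ) * (u : ℂ)) := by
    rw [← ee_add]
    congr 1
    linear_combination (-(n : ℂ)) * hu'
  rw [hlin, hz, hee, ofReal_mul_sq_div_cpow_norm (mul_pos hc hy),
    Complex.ofReal_mul, Complex.mul_cpow_ofReal_nonneg hc.le hy.le]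
  ring

lemma integral_comp_add_div {E : Type*} [NormedAddCommGroup E] [NormedSpace ℝ E] (g : ℝ → E)
    (a y : ℝ) : ∫ t : ℝ, g ((t + a) / y) = |y| • ∫ t : ℝ, g t := by
  rw [integral_add_right_eq_self (fun t => g (t / y)), Measure.integral_comp_div]

/-- First integral simplification in the Fourier coefficient computation. -/
theorem stmt7 (s : ℂ) (hs : 1 < s.re) (c d x y : ℝ) (hc : 0 < c) (hy : 0 < y) (n : ℤ) :
    (∫ t : ℝ, ((c*x + c*t + d : ℝ) : ℂ) ^ 2 /
        (((‖(c : ℂ) * ((x : ℂ) + (y : ℂ) * I) + (c : ℂ) * (t : ℂ) + (d : ℂ)‖ : ℝ) : ℂ)) ^ (2*s + 4) *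
        ee (-(n : ℂ) * (t : ℂ))) =
      ee ((n : ℂ) * (x : ℂ) + (n : ℂ) * (d : ℂ) / (c : ℂ)) * ((c : ℂ)) ^ (-2*s - 2) *
        ((y : ℂ)) ^ (-2*s - 1) *
        ((∫ t : ℝ, ((t^2 + 1 : ℝ) : ℂ) ^ (-(s + 1)) * ee (-(n : ℂ) * (y : ℂ) * (t : ℂ))) -
          ∫ t : ℝ, ((t^2 + 1 : ℝ) : ℂ) ^ (-(s + 2)) * ee (-(n : ℂ) * (y : ℂ) * (t : ℂ))) := by
  have hy_pow : (y : ℂ) ^ (-2*s - 2) * y = (y : ℂ) ^ (-2*s - 1) := by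
    rw [show -2*s - 1 = (-2*s - 2) + 1 by ring, Complex.cpow_add _ _ (by exact_mod_cast hy.ne'),
      Complex.cpow_one]
  have hfreq : ((-(n * y) : ℝ) : ℂ) = -(n : ℂ) * (y : ℂ) := by push_cast; ring
  have hintegrable : ∀ b : ℂ, 1 / 2 < b.re →
      Integrable fun t : ℝ => ((t^2 + 1 : ℝ) : ℂ) ^ (-b) * ee (-(n : ℂ) * (y : ℂ) * (t : ℂ)) :=
    fun b hb => by
      simpa only [hfreq] using (integrable_cpow_neg_sq_add_one hb).mul_ee_ofReal_mul (-(n * y))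
  let g : ℝ → ℂ := fun u => ((u ^ 2 + 1 : ℝ) : ℂ) ^ (-(s + 1)) * ee (-(n : ℂ) * (y : ℂ) * (u : ℂ)) -
    ((u ^ 2 + 1 : ℝ) : ℂ) ^ (-(s + 2)) * ee (-(n : ℂ) * (y : ℂ) * (u : ℂ))
  calc _ = ∫ t : ℝ, ee ((n : ℂ) * (x : ℂ) + (n : ℂ) * (d : ℂ) / (c : ℂ)) * (c : ℂ) ^ (-2*s - 2) *
          (y : ℂ) ^ (-2*s - 2) * g ((t + (x + d / c)) / y) :=
        integral_congr_ae (Filter.Eventually.of_forall fun t =>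
          integrand_eq s hc hy n (mul_div_cancel₀ _ hy.ne').symm)
    _ = ee ((n : ℂ) * (x : ℂ) + (n : ℂ) * (d : ℂ) / (c : ℂ)) * (c : ℂ) ^ (-2*s - 2) *
          ((y : ℂ) ^ (-2*s - 2) * y) * ∫ t : ℝ, g t := by
        rw [integral_const_mul, integral_comp_add_div g (x + d / c) y, abs_of_pos hy,
          Complex.real_smul]
        ring
    _ = _ := by
        rw [hy_pow, integral_sub (hintegrable _ (by norm_num; linarith))
          (hintegrable _ (by norm_num; linarith))]

end
end

section
/- Let s ∈ ℂ with Re(s) > 1/2, let n be a nonzero integer and y > 0. Then ∫_{−∞}^{∞} (t²+1)^{−s} · e(−nyt) dt = 2 π^s |n|^{s−1/2} y^{s−1/2} Γ(s)^{−1} · K_{s−1/2}(2π|n|y), where K_ν(x) := ∫_{0}^{∞} exp(−x cosh t) · cosh(νt) dt is the modified Bessel function of the second kind (x > 0, ν ∈ ℂ). -/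
open Complex MeasureTheory
open scoped Real

noncomputable section

/-!
Write `(t² + 1)^{-s} = Γ(s)⁻¹ ∫₀^∞ u^{s-1} e^{-(t²+1)u} du` and exchange the two integrals, which
is legitimate because `∫ (t² + 1)^{-Re s} dt < ∞` for `Re s > 1/2`. The integral over `t` is the
Fourier transform of a Gaussian, `√(π/u) e^{-β²/(4u)}` with `β = -2πny`, which leaves
`√π Γ(s)⁻¹ ∫₀^∞ u^{s-3/2} e^{-u-β²/(4u)} du`. The substitution `u = (|β|/2) eˣ` turns
`u + β²/(4u)` into `|β| cosh x`, so this integral becomes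
`(|β|/2)^{s-1/2} ∫_ℝ e^{(s-1/2)x} e^{-|β| cosh x} dx`, and folding the line onto `(0, ∞)` gives
`2 K_{s-1/2}(|β|)`.
-/

open Set

lemma Real.one_add_sq_div_four_le_cosh (x : ℝ) : 1 + x ^ 2 / 4 ≤ Real.cosh x := by
  have h₁ := Real.quadratic_le_exp_of_nonneg (abs_nonneg x)
  have h₂ := Real.add_one_le_exp (-|x|)
  rw [← Real.cosh_abs, Real.cosh_eq]
  nlinarith [sq_abs x]

lemma integrable_cexp_mul_mul_cexp_neg_mul_cosh (w : ℂ) {a : ℝ} (ha : 0 < a) :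
    Integrable fun x : ℝ => cexp (w * x) * cexp (-a * Real.cosh x) := by
  have hgauss : Integrable fun x : ℝ => cexp (-(a / 4 : ℝ) * x ^ 2 + w.re * x + -a) :=
    integrable_cexp_quadratic (b := ((a / 4 : ℝ) : ℂ)) (by simpa using ha) _ _
  refine hgauss.norm.mono' (by fun_prop) (ae_of_all _ fun x => ?_)
  rw [norm_mul, Complex.norm_exp, Complex.norm_exp, Complex.norm_exp, ← Real.exp_add]
  gcongr
  have := Real.one_add_sq_div_four_le_cosh x
  simp only [← ofReal_pow, ← ofReal_neg, ← ofReal_mul, add_re, ofReal_re, mul_re, ofReal_im]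
  nlinarith

lemma two_mul_Kbessel_eq_integral (ν : ℂ) {a : ℝ} (ha : 0 < a) :
    2 * Kbessel ν a = ∫ x : ℝ, cexp (ν * x) * cexp (-a * Real.cosh x) := by
  set f : ℝ → ℂ := fun x => cexp (ν * x) * cexp (-a * Real.cosh x)
  have hf : Integrable f := integrable_cexp_mul_mul_cexp_neg_mul_cosh ν ha
  have hf_neg : Integrable fun x => f (-x) := hf.comp_neg
  rw [← intervalIntegral.integral_Iic_add_Ioi (b := 0) hf.integrableOn hf.integrableOn,
    ← neg_zero, ← integral_comp_neg_Ioi, neg_zero,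
    ← integral_add hf_neg.integrableOn hf.integrableOn, Kbessel, ← integral_const_mul]
  refine setIntegral_congr_fun measurableSet_Ioi fun x _ => ?_
  simp only [f, ofReal_neg, Real.cosh_neg, mul_neg]
  linear_combination cexp (-a * Real.cosh x) * two_cosh (ν * x)

lemma ofReal_exp_cpow (x : ℝ) (w : ℂ) : (Real.exp x : ℂ) ^ w = cexp (w * x) := by
  rw [cpow_def_of_ne_zero (ofReal_ne_zero.2 (Real.exp_pos x).ne'),
    ← ofReal_log (Real.exp_pos x).le, Real.log_exp, mul_comm]

lemma image_univ_const_mul_exp {c : ℝ} (hc : 0 < c) :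
    (fun x => c * Real.exp x) '' univ = Ioi 0 := by
  ext u
  refine ⟨fun ⟨x, _, hx⟩ => hx ▸ mul_pos hc (Real.exp_pos x), fun hu => ?_⟩
  refine ⟨Real.log (u / c), trivial, ?_⟩
  simp only [Real.exp_log (div_pos hu hc), mul_div_cancel₀ _ hc.ne']

lemma integral_cpow_mul_cexp_neg_sub_div (ν : ℂ) {a : ℝ} (ha : 0 < a) :
    ∫ u in Ioi (0 : ℝ), (u : ℂ) ^ (ν - 1) * cexp (-u - a ^ 2 / (4 * u)) =
      2 * ((a / 2 : ℝ) : ℂ) ^ ν * Kbessel ν a := by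
  set c := a / 2
  have hc : 0 < c := by positivity
  have hcosh (x : ℝ) : c * Real.exp x + a ^ 2 / (4 * (c * Real.exp x)) = a * Real.cosh x := by
    rw [Real.cosh_eq, Real.exp_neg]
    field_simp
    ring
  have hpoint (x : ℝ) : |c * Real.exp x| • (((c * Real.exp x : ℝ) : ℂ) ^ (ν - 1) *
      cexp (-(c * Real.exp x : ℝ) - a ^ 2 / (4 * (c * Real.exp x : ℝ)))) =
      (c : ℂ) ^ ν * (cexp (ν * x) * cexp (-a * Real.cosh x)) := by
    have hexp : -((c * Real.exp x : ℝ) : ℂ) - a ^ 2 / (4 * (c * Real.exp x : ℝ)) =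
        -a * Real.cosh x := by
      have := congrArg ((↑) : ℝ → ℂ) (hcosh x)
      push_cast at this ⊢
      linear_combination -this
    have hpow : (c : ℂ) ^ ν = (c : ℂ) ^ (ν - 1) * c := by
      rw [cpow_sub _ _ (ofReal_ne_zero.2 hc.ne'), cpow_one,
        div_mul_cancel₀ _ (ofReal_ne_zero.2 hc.ne')]
    have hν : cexp (ν * x) = cexp ((ν - 1) * x) * cexp x := by
      rw [← Complex.exp_add]; congr 1; ring
    rw [abs_of_pos (by positivity), hexp, ofReal_mul, mul_cpow_ofReal_nonneg hc.le
      (Real.exp_pos x).le, ofReal_exp_cpow, real_smul, hpow, hν, ofReal_mul, ofReal_exp]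
    ring
  rw [← image_univ_const_mul_exp hc, integral_image_eq_integral_abs_deriv_smul MeasurableSet.univ
    (fun x _ => ((Real.hasDerivAt_exp x).const_mul c).hasDerivWithinAt)
    (fun x _ y _ h => Real.exp_injective (mul_left_cancel₀ hc.ne' h)), setIntegral_univ]
  simp_rw [hpoint]
  rw [integral_const_mul, ← two_mul_Kbessel_eq_integral ν ha]
  ring

lemma ofReal_cpow_neg_eq_inv_Gamma_mul_integral {s : ℂ} (hs : 0 < s.re) {r : ℝ} (hr : 0 < r) :
    (r : ℂ) ^ (-s) = (Gamma s)⁻¹ * ∫ u in Ioi (0 : ℝ), (u : ℂ) ^ (s - 1) * cexp (-(r * u)) := by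
  rw [integral_cpow_mul_exp_neg_mul_Ioi hs hr, one_div, inv_cpow_ofReal_nonneg hr.le, ← cpow_neg,
    mul_comm _ (Gamma s), inv_mul_cancel_left₀ (Gamma_ne_zero_of_re_pos hs)]

lemma norm_cexp_mul_cpow_mul_cexp (s : ℂ) (β t : ℝ) {u : ℝ} (hu : 0 < u) :
    ‖cexp (I * β * t) * ((u : ℂ) ^ (s - 1) * cexp (-((t ^ 2 + 1 : ℝ) * u)))‖ =
      u ^ (s.re - 1) * Real.exp (-((t ^ 2 + 1) * u)) := by
  rw [norm_mul, norm_mul, norm_cpow_eq_rpow_re_of_pos hu, Complex.norm_exp, Complex.norm_exp,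
    ← ofReal_mul, ← ofReal_neg, ofReal_re]
  simp

lemma integrable_prod_cexp_mul_cpow_mul_cexp {s : ℂ} (hs : 1 / 2 < s.re) (β : ℝ) :
    Integrable (Function.uncurry fun t u : ℝ =>
        cexp (I * β * t) * ((u : ℂ) ^ (s - 1) * cexp (-((t ^ 2 + 1 : ℝ) * u))))
      (volume.prod (volume.restrict (Ioi 0))) := by
  have hσ : 0 < s.re := by linarith
  refine (integrable_prod_iff (Measurable.aestronglyMeasurable (by fun_prop))).2
    ⟨ae_of_all _ fun t => ?_, ?_⟩
  · refine (Real.GammaIntegral_convergent hσ).mono' (by fun_prop) ?_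
    filter_upwards [ae_restrict_mem measurableSet_Ioi] with u (hu : 0 < u)
    rw [Function.uncurry_apply_pair, norm_cexp_mul_cpow_mul_cexp s β t hu, mul_comm]
    gcongr
    nlinarith [sq_nonneg t]
  · have hnorm (t : ℝ) : ∫ u in Ioi (0 : ℝ),
          ‖cexp (I * β * t) * ((u : ℂ) ^ (s - 1) * cexp (-((t ^ 2 + 1 : ℝ) * u)))‖ =
        (1 + ‖t‖ ^ 2) ^ (-(2 * s.re) / 2) * Real.Gamma s.re := by
      rw [setIntegral_congr_fun measurableSet_Ioi fun u (hu : 0 < u) =>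
          norm_cexp_mul_cpow_mul_cexp s β t hu,
        Real.integral_rpow_mul_exp_neg_mul_Ioi hσ (by positivity), Real.norm_eq_abs, sq_abs,
        one_div, Real.inv_rpow (by positivity), ← Real.rpow_neg (by positivity), add_comm]
      congr 2
      ring
    simp_rw [Function.uncurry_apply_pair, hnorm]
    exact (integrable_rpow_neg_one_add_norm_sq (by simp; linarith)).mul_const _

lemma integral_cexp_mul_cpow_mul_cexp (s : ℂ) (β : ℝ) {u : ℝ} (hu : 0 < u) :
    ∫ t : ℝ, cexp (I * β * t) * ((u : ℂ) ^ (s - 1) * cexp (-((t ^ 2 + 1 : ℝ) * u))) =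
      (π : ℂ) ^ (1 / 2 : ℂ) * ((u : ℂ) ^ (s - 1 / 2 - 1) * cexp (-u - β ^ 2 / (4 * u))) := by
  have hu' : (u : ℂ) ≠ 0 := ofReal_ne_zero.2 hu.ne'
  have hsplit (t : ℝ) : cexp (I * β * t) * ((u : ℂ) ^ (s - 1) * cexp (-((t ^ 2 + 1 : ℝ) * u))) =
      (u : ℂ) ^ (s - 1) * cexp (-u) * (cexp (I * β * t) * cexp (-u * t ^ 2)) := by
    rw [show -(((t ^ 2 + 1 : ℝ) : ℂ) * u) = -u + -u * t ^ 2 by push_cast; ring, Complex.exp_add]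
    ring
  simp_rw [hsplit]
  have hpow : (u : ℂ) ^ (s - 1 / 2 - 1) = (u : ℂ) ^ (s - 1) / (u : ℂ) ^ (1 / 2 : ℂ) := by
    rw [← cpow_sub _ _ hu']; congr 1; ring
  rw [integral_const_mul, fourierIntegral_gaussian (by simpa using hu),
    div_cpow_ofReal_nonneg Real.pi_pos.le hu.le, hpow, neg_div, sub_eq_add_neg (-(u : ℂ)),
    Complex.exp_add]
  ring

theorem integral_ofReal_sq_add_one_cpow_neg_mul_cexp {s : ℂ} (hs : 1 / 2 < s.re) {β : ℝ}
    (hβ : β ≠ 0) :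
    ∫ t : ℝ, ((t ^ 2 + 1 : ℝ) : ℂ) ^ (-s) * cexp (I * β * t) =
      2 * (π : ℂ) ^ (1 / 2 : ℂ) * (Gamma s)⁻¹ * ((|β| / 2 : ℝ) : ℂ) ^ (s - 1 / 2) *
        Kbessel (s - 1 / 2) |β| := by
  have hσ : 0 < s.re := by linarith
  calc ∫ t : ℝ, ((t ^ 2 + 1 : ℝ) : ℂ) ^ (-s) * cexp (I * β * t)
      = ∫ t : ℝ, (Gamma s)⁻¹ * ∫ u in Ioi (0 : ℝ),
          cexp (I * β * t) * ((u : ℂ) ^ (s - 1) * cexp (-((t ^ 2 + 1 : ℝ) * u))) := by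
        congr 1 with t
        rw [ofReal_cpow_neg_eq_inv_Gamma_mul_integral hσ (by positivity), integral_const_mul]
        ring
    _ = (Gamma s)⁻¹ * ∫ u in Ioi (0 : ℝ), ∫ t : ℝ,
          cexp (I * β * t) * ((u : ℂ) ^ (s - 1) * cexp (-((t ^ 2 + 1 : ℝ) * u))) := by
        rw [integral_const_mul,
          integral_integral_swap (integrable_prod_cexp_mul_cpow_mul_cexp hs β)]
    _ = (Gamma s)⁻¹ * ∫ u in Ioi (0 : ℝ), (π : ℂ) ^ (1 / 2 : ℂ) *
          ((u : ℂ) ^ (s - 1 / 2 - 1) * cexp (-u - |β| ^ 2 / (4 * u))) := by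
        congr 1
        refine setIntegral_congr_fun measurableSet_Ioi fun u (hu : 0 < u) => ?_
        rw [integral_cexp_mul_cpow_mul_cexp s β hu, ← ofReal_pow, ← ofReal_pow, sq_abs]
    _ = _ := by
        rw [integral_const_mul, integral_cpow_mul_cexp_neg_sub_div _ (abs_pos.2 hβ)]
        ring

/-- Bessel-type Fourier integral: for `n ≠ 0`,
`∫ (t²+1)^{-s} e(-nyt) dt = 2π^s |n|^{s-1/2} y^{s-1/2} Γ(s)⁻¹ K_{s-1/2}(2π|n|y)`. -/
theorem stmt11 (s : ℂ) (hs : 1/2 < s.re) (n : ℤ) (hn : n ≠ 0) (y : ℝ) (hy : 0 < y) :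
    (∫ t : ℝ, ((t^2 + 1 : ℝ) : ℂ) ^ (-s) * ee (-(n : ℂ) * (y : ℂ) * (t : ℂ))) =
      2 * (π : ℂ) ^ s * ((|(n : ℝ)| : ℝ) : ℂ) ^ (s - 1/2) * ((y : ℝ) : ℂ) ^ (s - 1/2) *
        (Complex.Gamma s)⁻¹ * Kbessel (s - 1/2) (2*π * |(n : ℝ)| * y) := by
  set β : ℝ := -(2 * π * n * y)
  have hβ : β ≠ 0 := by simp [β, hn, hy.ne', Real.pi_ne_zero]
  have habs : |β| = 2 * π * |(n : ℝ)| * y := by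
    simp [β, abs_mul, abs_of_pos hy, abs_of_pos Real.pi_pos]
  have hee (t : ℝ) : ee (-(n : ℂ) * (y : ℂ) * (t : ℂ)) = cexp (I * β * t) := by
    rw [ee]; push_cast [β]; congr 1; ring
  have hπ : (π : ℂ) ^ (1 / 2 : ℂ) * (π : ℂ) ^ (s - 1 / 2) = (π : ℂ) ^ s := by
    rw [← cpow_add _ _ (ofReal_ne_zero.2 Real.pi_ne_zero)]; congr 1; ring
  simp_rw [hee]
  rw [integral_ofReal_sq_add_one_cpow_neg_mul_cexp hs hβ, habs,
    show 2 * π * |(n : ℝ)| * y / 2 = π * (|(n : ℝ)| * y) by ring, ofReal_mul,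
    mul_cpow_ofReal_nonneg Real.pi_pos.le (by positivity), ofReal_mul,
    mul_cpow_ofReal_nonneg (abs_nonneg _) hy.le, ← hπ]
  ring

end
end
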